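/- Let (E,C) be a row-finite bipartite separated graph with s(E^1)=E^{0,0} and r(E^1)=E^{0,1}, and let K be a field with involution. Then there is a *-algebra isomorphism φ_W : LW(E,C) → W L(E,C) W determined by φ_W(p_w)=w for w∈E^{0,1} and φ_W(ρ(e,f))=e* f for e,f∈E^1 with s(e)=s(f) and X_e≠X_f, where W L(E,C) W denotes the linear span in L(E,C) of all elements u a w with u,w∈E^{0,1} and a∈L(E,C). -/
import Mathlib


open Sum

set_option linter.unusedSectionVars false
noncomputable section
set_option maxHeartbeats 1000000
open scoped Classical

/-- A bipartite separated graph. -/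
structure BipSepGraph where
  V0 : Type
  V1 : Type
  E : Type
  s : E → V0
  r : E → V1
  c : E → E → Prop
  c_equiv : Equivalence c
  c_src : ∀ {e f}, c e f → s e = s f
  rowFinite : ∀ v : V0, {e | s e = v}.Finite

namespace BipSepGraph

lemma classSet_finite (G : BipSepGraph) (e : G.E) : {f | G.c e f}.Finite :=
  (G.rowFinite (G.s e)).subset (fun _ hf => (G.c_src hf).symm)

/-- The finite set of edges in the same member of the partition `C` as `e`. -/
def classFinset (G : BipSepGraph) (e : G.E) : Finset G.E :=
  (G.classSet_finite e).toFinset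

end BipSepGraph

variable (K : Type) [Field K] [StarRing K]

/-- A representation of the relations defining the Leavitt path algebra `L(E,C)` of a
separated graph in a (nonunital) `*`-algebra. -/
structure LPARep (G : BipSepGraph) (A : Type) [NonUnitalRing A] [Module K A]
    [SMulCommClass K A A] [IsScalarTower K A A] [StarRing A] [StarModule K A] where
  pv : G.V0 ⊕ G.V1 → A
  ge : G.E → A
  pv_star : ∀ u, star (pv u) = pv u
  pv_idem : ∀ u, pv u * pv u = pv u
  pv_orth : ∀ u u', u ≠ u' → pv u * pv u' = 0
  src_mul : ∀ e, pv (inl (G.s e)) * ge e = ge e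
  mul_rng : ∀ e, ge e * pv (inr (G.r e)) = ge e
  sck1 : ∀ e f, G.c e f → star (ge e) * ge f = if e = f then pv (inr (G.r e)) else 0
  sck2 : ∀ e, ∑ f ∈ G.classFinset e, ge f * star (ge f) = pv (inl (G.s e))

/-- `L` (with the representation `ρ`) *is* the Leavitt path algebra `L(E,C)`:
it satisfies the universal property among all `*`-algebras over `K`. -/
def IsLPA (G : BipSepGraph) (L : Type) [NonUnitalRing L] [Module K L]
    [SMulCommClass K L L] [IsScalarTower K L L] [StarRing L] [StarModule K L]
    (ρ : LPARep K G L) : Prop :=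
  ∀ (A : Type) [NonUnitalRing A] [Module K A] [SMulCommClass K A A] [IsScalarTower K A A]
    [StarRing A] [StarModule K A] (σ : LPARep K G A),
    ∃! φ : L →⋆ₙₐ[K] A, (∀ u, φ (ρ.pv u) = σ.pv u) ∧ (∀ e, φ (ρ.ge e) = σ.ge e)

/-- A representation of the relations defining the upper Leavitt path algebra `LV(E,C)`
of a bipartite separated graph.  The generator `τ(e,f)` (for `r e = r f`) is `tau e f`;
values of `tau` at pairs with `r e ≠ r f` are irrelevant. -/
structure LVRep (G : BipSepGraph) (A : Type) [NonUnitalRing A] [Module K A]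
    [SMulCommClass K A A] [IsScalarTower K A A] [StarRing A] [StarModule K A] where
  pv : G.V0 → A
  tau : G.E → G.E → A
  pv_star : ∀ v, star (pv v) = pv v
  pv_idem : ∀ v, pv v * pv v = pv v
  pv_orth : ∀ v v', v ≠ v' → pv v * pv v' = 0
  tau_star : ∀ e f, G.r e = G.r f → star (tau e f) = tau f e
  tau_right : ∀ e f, G.r e = G.r f → tau e f * pv (G.s f) = tau e f
  tau_left : ∀ e f, G.r e = G.r f → pv (G.s e) * tau e f = tau e f
  sck1 : ∀ e f g h, G.r e = G.r f → G.r g = G.r h → G.c f g →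
    tau e f * tau g h = if f = g then tau e h else 0
  sck2 : ∀ g : G.E, ∑ e ∈ G.classFinset g, tau e e = pv (G.s g)

/-- `L` (with the representation `ρ`) *is* the upper Leavitt path algebra `LV(E,C)`. -/
def IsLV (G : BipSepGraph) (L : Type) [NonUnitalRing L] [Module K L]
    [SMulCommClass K L L] [IsScalarTower K L L] [StarRing L] [StarModule K L]
    (ρ : LVRep K G L) : Prop :=
  ∀ (A : Type) [NonUnitalRing A] [Module K A] [SMulCommClass K A A] [IsScalarTower K A A]
    [StarRing A] [StarModule K A] (σ : LVRep K G A),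
    ∃! φ : L →⋆ₙₐ[K] A, (∀ v, φ (ρ.pv v) = σ.pv v) ∧
      (∀ e f, G.r e = G.r f → φ (ρ.tau e f) = σ.tau e f)

/-- A representation of the relations defining the lower Leavitt path algebra `LW(E,C)`
of a bipartite separated graph.  The generator `ρ(e,f)` (for `s e = s f`, `X_e ≠ X_f`)
is `rho e f`; the values of `rho` at other pairs are irrelevant. -/
structure LWRep (G : BipSepGraph) (A : Type) [NonUnitalRing A] [Module K A]
    [SMulCommClass K A A] [IsScalarTower K A A] [StarRing A] [StarModule K A] where
  pw : G.V1 → A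
  rho : G.E → G.E → A
  pw_star : ∀ w, star (pw w) = pw w
  pw_idem : ∀ w, pw w * pw w = pw w
  pw_orth : ∀ w w', w ≠ w' → pw w * pw w' = 0
  rho_star : ∀ e f, G.s e = G.s f → ¬ G.c e f → star (rho e f) = rho f e
  rho_right : ∀ e f, G.s e = G.s f → ¬ G.c e f → rho e f * pw (G.r f) = rho e f
  rho_left : ∀ e f, G.s e = G.s f → ¬ G.c e f → pw (G.r e) * rho e f = rho e f
  sck1 : ∀ e h g, G.s e = G.s h → G.s g = G.s e → ¬ G.c g e → ¬ G.c g h →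
    (∑ f ∈ G.classFinset g, rho e f * rho f h) =
      if G.c e h then (if e = h then pw (G.r e) else 0) else rho e h

/-- `L` (with the representation `ρ`) *is* the lower Leavitt path algebra `LW(E,C)`. -/
def IsLW (G : BipSepGraph) (L : Type) [NonUnitalRing L] [Module K L]
    [SMulCommClass K L L] [IsScalarTower K L L] [StarRing L] [StarModule K L]
    (ρ : LWRep K G L) : Prop :=
  ∀ (A : Type) [NonUnitalRing A] [Module K A] [SMulCommClass K A A] [IsScalarTower K A A]
    [StarRing A] [StarModule K A] (σ : LWRep K G A),
    ∃! φ : L →⋆ₙₐ[K] A, (∀ w, φ (ρ.pw w) = σ.pw w) ∧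
      (∀ e f, G.s e = G.s f → ¬ G.c e f → φ (ρ.rho e f) = σ.rho e f)

/-! ### Auxiliary development for Statement 1 -/

section StarOpSec

variable {M : Type} [AddCommGroup M] [Module K M]

/-- A pair of operators `(T, S)`, thought of as an operator together with a formal
adjoint.  This carries a `*`-algebra structure with `star (T, S) = (S, T)`. -/
@[ext] structure StarOp (M : Type) [AddCommGroup M] [Module K M] where
  T : Module.End K M
  S : Module.End K M

namespace StarOp

variable {K}

instance : Zero (StarOp K M) := ⟨⟨0, 0⟩⟩
instance : Add (StarOp K M) := ⟨fun a b => ⟨a.T + b.T, a.S + b.S⟩⟩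
instance : Neg (StarOp K M) := ⟨fun a => ⟨-a.T, -a.S⟩⟩
instance : Sub (StarOp K M) := ⟨fun a b => ⟨a.T - b.T, a.S - b.S⟩⟩
instance : SMul ℕ (StarOp K M) := ⟨fun n a => ⟨n • a.T, n • a.S⟩⟩
instance : SMul ℤ (StarOp K M) := ⟨fun n a => ⟨n • a.T, n • a.S⟩⟩
instance : SMul K (StarOp K M) := ⟨fun k a => ⟨k • a.T, star k • a.S⟩⟩
instance : Mul (StarOp K M) := ⟨fun a b => ⟨a.T * b.T, b.S * a.S⟩⟩
instance : Star (StarOp K M) := ⟨fun a => ⟨a.S, a.T⟩⟩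

@[simp] lemma zero_T : (0 : StarOp K M).T = 0 := rfl
@[simp] lemma zero_S : (0 : StarOp K M).S = 0 := rfl
@[simp] lemma add_T (a b : StarOp K M) : (a + b).T = a.T + b.T := rfl
@[simp] lemma add_S (a b : StarOp K M) : (a + b).S = a.S + b.S := rfl
@[simp] lemma mul_T (a b : StarOp K M) : (a * b).T = a.T * b.T := rfl
@[simp] lemma mul_S (a b : StarOp K M) : (a * b).S = b.S * a.S := rfl
@[simp] lemma smul_T (k : K) (a : StarOp K M) : (k • a).T = k • a.T := rfl
@[simp] lemma smul_S (k : K) (a : StarOp K M) : (k • a).S = star k • a.S := rfl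
@[simp] lemma star_T (a : StarOp K M) : (star a).T = a.S := rfl
@[simp] lemma star_S (a : StarOp K M) : (star a).S = a.T := rfl
@[simp] lemma neg_T (a : StarOp K M) : (-a).T = -a.T := rfl
@[simp] lemma neg_S (a : StarOp K M) : (-a).S = -a.S := rfl

instance : AddCommGroup (StarOp K M) :=
  Function.Injective.addCommGroup
    (fun a : StarOp K M => ((a.T, a.S) : Module.End K M × Module.End K M))
    (fun a b h => by
      cases a; cases b
      simpa [Prod.ext_iff, StarOp.ext_iff] using h)
    rfl (fun _ _ => rfl) (fun _ => rfl) (fun _ _ => rfl) (fun _ _ => rfl) (fun _ _ => rfl)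

instance : NonUnitalRing (StarOp K M) :=
  { (inferInstance : AddCommGroup (StarOp K M)) with
    left_distrib := fun a b c => by ext : 1 <;> simp [mul_add, add_mul]
    right_distrib := fun a b c => by ext : 1 <;> simp [mul_add, add_mul]
    zero_mul := fun a => by ext : 1 <;> simp
    mul_zero := fun a => by ext : 1 <;> simp
    mul_assoc := fun a b c => by ext : 1 <;> simp [mul_assoc] }

instance : Module K (StarOp K M) where
  one_smul a := by ext : 1 <;> simp
  mul_smul k l a := by ext : 1 <;> simp [mul_smul, star_mul, mul_comm]
  smul_zero k := by ext : 1 <;> simp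
  smul_add k a b := by ext : 1 <;> simp
  add_smul k l a := by ext : 1 <;> simp [add_smul]
  zero_smul a := by ext : 1 <;> simp

instance : SMulCommClass K (StarOp K M) (StarOp K M) where
  smul_comm k a b := by
    ext : 1 <;> simp [mul_smul_comm, smul_mul_assoc]

instance : IsScalarTower K (StarOp K M) (StarOp K M) where
  smul_assoc k a b := by
    ext : 1 <;> simp [mul_smul_comm, smul_mul_assoc]

instance : StarRing (StarOp K M) where
  star_involutive a := by ext : 1 <;> simp
  star_mul a b := by ext : 1 <;> simp
  star_add a b := by ext : 1 <;> simp

instance : StarModule K (StarOp K M) where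
  star_smul k a := by ext : 1 <;> simp

/-- Projection onto the first component, as an additive monoid homomorphism. -/
def Thom : StarOp K M →+ Module.End K M where
  toFun := T
  map_zero' := rfl
  map_add' _ _ := rfl

@[simp] lemma Thom_apply (a : StarOp K M) : (Thom a : Module.End K M) = a.T := rfl

@[simp] lemma sum_T {ι : Type*} (s : Finset ι) (f : ι → StarOp K M) :
    (∑ i ∈ s, f i).T = ∑ i ∈ s, (f i).T :=
  map_sum (Thom (K := K) (M := M)) f s

/-- Projection onto the second component, as an additive monoid homomorphism. -/
def Shom : StarOp K M →+ Module.End K M where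
  toFun := S
  map_zero' := rfl
  map_add' _ _ := rfl

@[simp] lemma sum_S {ι : Type*} (s : Finset ι) (f : ι → StarOp K M) :
    (∑ i ∈ s, f i).S = ∑ i ∈ s, (f i).S :=
  map_sum (Shom (K := K) (M := M)) f s

end StarOp

end StarOpSec

section EmatSec

variable {I R : Type} [NonUnitalRing R] [Module K R]
  [SMulCommClass K R R] [IsScalarTower K R R]

/-- The "matrix unit" operator on `I →₀ R` sending `single j a` to `single i (x * a)`. -/
def Emat (i j : I) (x : R) : Module.End K (I →₀ R) :=
  (Finsupp.lsingle i) ∘ₗ (LinearMap.mulLeft K x) ∘ₗ (Finsupp.lapply j)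

variable {K}

@[simp] lemma Emat_apply_single (i j l : I) (x : R) (a : R) :
    Emat K i j x (Finsupp.single l a) =
      if l = j then Finsupp.single i (x * a) else 0 := by
  simp only [Emat, LinearMap.comp_apply, Finsupp.lapply_apply, Finsupp.lsingle_apply,
    Finsupp.single_apply]
  split <;> simp

lemma Emat_mul (i j k l : I) (x y : R) :
    Emat K i j x * Emat K k l y = if j = k then Emat K i l (x * y) else 0 := by
  refine Finsupp.lhom_ext fun a b => ?_
  rw [Module.End.mul_apply, Emat_apply_single, apply_ite (Emat K i j x), map_zero,
    Emat_apply_single, apply_ite (fun f : Module.End K (I →₀ R) => f (Finsupp.single a b)),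
    Emat_apply_single]
  simp only [LinearMap.zero_apply]
  by_cases h1 : a = l <;> by_cases h2 : j = k
  · rw [if_pos h1, if_pos h1, if_pos h2.symm, if_pos h2, mul_assoc]
  · rw [if_pos h1, if_pos h1, if_neg (fun h => h2 h.symm), if_neg h2]
  · rw [if_neg h1, if_neg h1, if_pos h2]
  · rw [if_neg h1, if_neg h1, if_neg h2]

@[simp] lemma Emat_zero (i j : I) : Emat K i j (0 : R) = 0 := by
  refine Finsupp.lhom_ext fun a b => ?_
  simp

lemma Emat_add (i j : I) (x y : R) :
    Emat K i j (x + y) = Emat K i j x + Emat K i j y := by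
  refine Finsupp.lhom_ext fun a b => ?_
  simp only [Emat_apply_single, LinearMap.add_apply, add_mul]
  split <;> simp [Finsupp.single_add]

lemma Emat_sum (i j : I) {a : Type} (s : Finset a) (x : a → R) :
    ∑ k ∈ s, Emat K i j (x k) = Emat K i j (∑ k ∈ s, x k) := by
  induction s using Finset.cons_induction with
  | empty => simp
  | cons c t hc ih => rw [Finset.sum_cons, Finset.sum_cons, ih, Emat_add]

end EmatSec


section AuxGraph

variable {G : BipSepGraph}

lemma mem_classFinset {e f : G.E} : f ∈ G.classFinset e ↔ G.c e f := by
  simp [BipSepGraph.classFinset, Set.Finite.mem_toFinset]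

lemma c_refl (G : BipSepGraph) (e : G.E) : G.c e e := G.c_equiv.refl e

lemma c_symm {e f : G.E} (h : G.c e f) : G.c f e := G.c_equiv.symm h

lemma c_trans {e f g : G.E} (h : G.c e f) (h' : G.c f g) : G.c e g := G.c_equiv.trans h h'

lemma self_mem_classFinset (e : G.E) : e ∈ G.classFinset e := mem_classFinset.mpr (c_refl G e)

lemma s_of_mem_classFinset {e f : G.E} (h : f ∈ G.classFinset e) : G.s f = G.s e :=
  (G.c_src (mem_classFinset.mp h)).symm

end AuxGraph

variable {K}

section AuxLW

variable {G : BipSepGraph} {A : Type} [NonUnitalRing A] [Module K A]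
  [SMulCommClass K A A] [IsScalarTower K A A] [StarRing A] [StarModule K A]

/-- `ρ(e,f)`, extended to pairs in the same class by `ρ(e,f) = δ_{e,f} p_{r(e)}`. -/
def rhoHat (σ : LWRep K G A) (e f : G.E) : A :=
  if G.c e f then (if e = f then σ.pw (G.r e) else 0) else σ.rho e f

variable (σ : LWRep K G A)

lemma rhoHat_self (e : G.E) : rhoHat σ e e = σ.pw (G.r e) := by
  simp [rhoHat, c_refl]

lemma rhoHat_of_not {e f : G.E} (h : ¬ G.c e f) : rhoHat σ e f = σ.rho e f := by
  simp [rhoHat, h]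

lemma rhoHat_of_c {e f : G.E} (h : G.c e f) (hne : e ≠ f) : rhoHat σ e f = 0 := by
  simp [rhoHat, h, hne]

lemma pw_mul_pw (w w' : G.V1) : σ.pw w * σ.pw w' = if w = w' then σ.pw w else 0 := by
  by_cases h : w = w'
  · subst h; simp [σ.pw_idem]
  · simp [h, σ.pw_orth w w' h]

lemma rhoHat_star {e f : G.E} (h : G.s e = G.s f) :
    star (rhoHat σ e f) = rhoHat σ f e := by
  by_cases hc : G.c e f
  · have hc' : G.c f e := c_symm hc
    by_cases he : e = f
    · subst he; simp [rhoHat, hc, σ.pw_star]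
    · simp [rhoHat, hc, hc', he, Ne.symm he]
  · have hc' : ¬ G.c f e := fun hx => hc (c_symm hx)
    simp [rhoHat, hc, hc', σ.rho_star e f h hc]

lemma rhoHat_left {e f : G.E} (h : G.s e = G.s f) :
    σ.pw (G.r e) * rhoHat σ e f = rhoHat σ e f := by
  by_cases hc : G.c e f
  · by_cases he : e = f
    · subst he; simp [rhoHat, hc, σ.pw_idem]
    · simp [rhoHat, hc, he]
  · simp [rhoHat, hc, σ.rho_left e f h hc]

lemma rhoHat_right {e f : G.E} (h : G.s e = G.s f) :
    rhoHat σ e f * σ.pw (G.r f) = rhoHat σ e f := by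
  by_cases hc : G.c e f
  · by_cases he : e = f
    · subst he; simp [rhoHat, hc, σ.pw_idem]
    · simp [rhoHat, hc, he]
  · simp [rhoHat, hc, σ.rho_right e f h hc]

lemma pw_mul_rhoHat {e f : G.E} (h : G.s e = G.s f) (w : G.V1) :
    σ.pw w * rhoHat σ e f = if w = G.r e then rhoHat σ e f else 0 := by
  by_cases hw : w = G.r e
  · subst hw; simp [rhoHat_left σ h]
  · rw [if_neg hw, ← rhoHat_left σ h, ← mul_assoc, σ.pw_orth w (G.r e) hw, zero_mul]

lemma rhoHat_mul_pw {e f : G.E} (h : G.s e = G.s f) (w : G.V1) :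
    rhoHat σ e f * σ.pw w = if w = G.r f then rhoHat σ e f else 0 := by
  by_cases hw : w = G.r f
  · subst hw; simp [rhoHat_right σ h]
  · rw [if_neg hw, ← rhoHat_right σ h, mul_assoc, σ.pw_orth (G.r f) w (fun hx => hw hx.symm),
      mul_zero]

/-- The key computation: summing `ρ̂(e,k) ρ̂(k,f)` over any class at the common source
gives `ρ̂(e,f)`. -/
lemma hub_sum {e f g₀ : G.E} (hef : G.s e = G.s f) (hg : G.s g₀ = G.s e) :
    ∑ k ∈ G.classFinset g₀, rhoHat σ e k * rhoHat σ k f = rhoHat σ e f := by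
  by_cases h1 : G.c g₀ e
  · have he : e ∈ G.classFinset g₀ := mem_classFinset.mpr h1
    rw [Finset.sum_eq_single_of_mem e he]
    · rw [rhoHat_self σ, rhoHat_left σ hef]
    · intro k hk hne
      rw [rhoHat_of_c σ (c_trans (c_symm h1) (mem_classFinset.mp hk)) (fun hx => hne hx.symm),
        zero_mul]
  · by_cases h2 : G.c g₀ f
    · have hf : f ∈ G.classFinset g₀ := mem_classFinset.mpr h2
      rw [Finset.sum_eq_single_of_mem f hf]
      · rw [rhoHat_self σ, rhoHat_right σ hef]
      · intro k hk hne
        rw [rhoHat_of_c σ (c_trans (c_symm (mem_classFinset.mp hk)) h2) hne, mul_zero]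
    · have hcongr : ∀ k ∈ G.classFinset g₀,
          rhoHat σ e k * rhoHat σ k f = σ.rho e k * σ.rho k f := by
        intro k hk
        have hck : G.c g₀ k := mem_classFinset.mp hk
        have h3 : ¬ G.c e k := fun hx => h1 (c_symm (c_trans hx (c_symm hck)))
        have h4 : ¬ G.c k f := fun hx => h2 (c_trans hck hx)
        rw [rhoHat_of_not σ h3, rhoHat_of_not σ h4]
      rw [Finset.sum_congr rfl hcongr, σ.sck1 e f g₀ hef hg h1 h2]
      rfl

end AuxLW

section AuxLPA

variable {G : BipSepGraph} {L : Type} [NonUnitalRing L] [Module K L]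
  [SMulCommClass K L L] [IsScalarTower K L L] [StarRing L] [StarModule K L]
  (ρ : LPARep K G L)

lemma pv_mul_pv (u u' : G.V0 ⊕ G.V1) :
    ρ.pv u * ρ.pv u' = if u = u' then ρ.pv u else 0 := by
  by_cases h : u = u'
  · subst h; simp [ρ.pv_idem]
  · simp [h, ρ.pv_orth u u' h]

lemma pv_mul_ge (u : G.V0 ⊕ G.V1) (e : G.E) :
    ρ.pv u * ρ.ge e = if u = inl (G.s e) then ρ.ge e else 0 := by
  by_cases h : u = inl (G.s e)
  · subst h; simp [ρ.src_mul]
  · rw [if_neg h, ← ρ.src_mul e, ← mul_assoc, ρ.pv_orth u _ h, zero_mul]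

lemma ge_mul_pv (e : G.E) (u : G.V0 ⊕ G.V1) :
    ρ.ge e * ρ.pv u = if u = inr (G.r e) then ρ.ge e else 0 := by
  by_cases h : u = inr (G.r e)
  · subst h; simp [ρ.mul_rng]
  · rw [if_neg h, ← ρ.mul_rng e, mul_assoc, ρ.pv_orth _ u (fun hx => h hx.symm), mul_zero]

lemma star_ge_mul_pv (e : G.E) (u : G.V0 ⊕ G.V1) :
    star (ρ.ge e) * ρ.pv u = if u = inl (G.s e) then star (ρ.ge e) else 0 := by
  have h := congrArg star (pv_mul_ge ρ u e)
  rw [star_mul, ρ.pv_star] at h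
  rw [h]
  split <;> simp

lemma pv_mul_star_ge (u : G.V0 ⊕ G.V1) (e : G.E) :
    ρ.pv u * star (ρ.ge e) = if u = inr (G.r e) then star (ρ.ge e) else 0 := by
  have h := congrArg star (ge_mul_pv ρ e u)
  rw [star_mul, ρ.pv_star] at h
  rw [h]
  split <;> simp

lemma ge_mul_ge (e f : G.E) : ρ.ge e * ρ.ge f = 0 := by
  rw [← ρ.mul_rng e, mul_assoc, pv_mul_ge]
  simp

lemma star_ge_mul_star_ge (e f : G.E) : star (ρ.ge e) * star (ρ.ge f) = 0 := by
  have h := congrArg star (ge_mul_ge ρ f e)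
  rw [star_mul] at h
  simpa using h

lemma star_ge_mul_ge_of_ne {e f : G.E} (h : G.s e ≠ G.s f) :
    star (ρ.ge e) * ρ.ge f = 0 := by
  rw [← ρ.src_mul f, ← mul_assoc, star_ge_mul_pv]
  rw [if_neg (fun hx => h (by injection hx with h'; exact h'.symm)), zero_mul]

lemma star_ge_eq_pv_mul (e : G.E) :
    ρ.pv (inr (G.r e)) * star (ρ.ge e) = star (ρ.ge e) := by
  rw [pv_mul_star_ge, if_pos rfl]

lemma star_ge_eq_mul_pv (e : G.E) :
    star (ρ.ge e) * ρ.pv (inl (G.s e)) = star (ρ.ge e) := by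
  rw [star_ge_mul_pv, if_pos rfl]

end AuxLPA


section MatRep

variable {G : BipSepGraph} {A : Type} [NonUnitalRing A] [Module K A]
  [SMulCommClass K A A] [IsScalarTower K A A] [StarRing A] [StarModule K A]
  (σ : LWRep K G A) (g : G.V0 → G.E) (hg : ∀ v, G.s (g v) = v)

/-- The image of a vertex in the matrix representation. -/
def pvB : G.V0 ⊕ G.V1 → StarOp K ((G.E ⊕ G.V1) →₀ A)
  | inl v => ⟨∑ k ∈ G.classFinset (g v), Emat K (inl k) (inl k) (σ.pw (G.r k)),
              ∑ k ∈ G.classFinset (g v), Emat K (inl k) (inl k) (σ.pw (G.r k))⟩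
  | inr w => ⟨Emat K (inr w) (inr w) (σ.pw w), Emat K (inr w) (inr w) (σ.pw w)⟩

/-- First component of the image of an edge in the matrix representation. -/
def geBT (e : G.E) : Module.End K ((G.E ⊕ G.V1) →₀ A) :=
  ∑ k ∈ G.classFinset (g (G.s e)), Emat K (inl k) (inr (G.r e)) (rhoHat σ k e)

/-- Second component (formal adjoint) of the image of an edge. -/
def geBS (e : G.E) : Module.End K ((G.E ⊕ G.V1) →₀ A) :=
  ∑ k ∈ G.classFinset (g (G.s e)), Emat K (inr (G.r e)) (inl k) (rhoHat σ e k)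

/-- The image of an edge in the matrix representation. -/
def geB (e : G.E) : StarOp K ((G.E ⊕ G.V1) →₀ A) := ⟨geBT σ g e, geBS σ g e⟩

include hg

lemma mem_class_s {v : G.V0} {k : G.E} (hk : k ∈ G.classFinset (g v)) : G.s k = v := by
  rw [s_of_mem_classFinset hk, hg]

lemma geBS_mul_geBT {e f : G.E} (h : G.s e = G.s f) :
    geBS σ g e * geBT σ g f = Emat K (inr (G.r e)) (inr (G.r f)) (rhoHat σ e f) := by
  unfold geBS geBT
  rw [show G.s f = G.s e from h.symm, Finset.sum_mul_sum]
  have key : ∀ k ∈ G.classFinset (g (G.s e)), ∀ k' ∈ G.classFinset (g (G.s e)),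
      Emat K (inr (G.r e)) (inl k) (rhoHat σ e k) * Emat K (inl k') (inr (G.r f)) (rhoHat σ k' f)
      = if k = k' then Emat K (inr (G.r e)) (inr (G.r f)) (rhoHat σ e k * rhoHat σ k' f)
        else 0 := by
    intro k _ k' _
    rw [Emat_mul]
    by_cases hkk : k = k' <;> simp [hkk]
  calc ∑ k ∈ G.classFinset (g (G.s e)), ∑ k' ∈ G.classFinset (g (G.s e)),
        Emat K (inr (G.r e)) (inl k) (rhoHat σ e k) * Emat K (inl k') (inr (G.r f)) (rhoHat σ k' f)
      = ∑ k ∈ G.classFinset (g (G.s e)),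
          Emat K (inr (G.r e)) (inr (G.r f)) (rhoHat σ e k * rhoHat σ k f) := by
        refine Finset.sum_congr rfl fun k hk => ?_
        rw [Finset.sum_congr rfl (key k hk), Finset.sum_ite_eq, if_pos hk]
    _ = Emat K (inr (G.r e)) (inr (G.r f)) (rhoHat σ e f) := by
        rw [Emat_sum, hub_sum σ h (hg (G.s e))]

omit hg in
lemma geBT_mul_geBS (f : G.E) :
    geBT σ g f * geBS σ g f = ∑ k ∈ G.classFinset (g (G.s f)), ∑ k' ∈ G.classFinset (g (G.s f)),
      Emat K (inl k) (inl k') (rhoHat σ k f * rhoHat σ f k') := by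
  unfold geBT geBS
  rw [Finset.sum_mul_sum]
  refine Finset.sum_congr rfl fun k hk => Finset.sum_congr rfl fun k' hk' => ?_
  rw [Emat_mul, if_pos rfl]

lemma pvB_inl_mul_geBT (e : G.E) :
    (∑ k ∈ G.classFinset (g (G.s e)), Emat K (inl k) (inl k) (σ.pw (G.r k))) * geBT σ g e
      = geBT σ g e := by
  unfold geBT
  rw [Finset.sum_mul_sum]
  refine Finset.sum_congr rfl fun k hk => ?_
  have key : ∀ k' ∈ G.classFinset (g (G.s e)),
      Emat K (inl k) (inl k) (σ.pw (G.r k)) * Emat K (inl k') (inr (G.r e)) (rhoHat σ k' e)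
      = if k = k' then Emat K (inl k) (inr (G.r e)) (σ.pw (G.r k) * rhoHat σ k' e)
        else 0 := by
    intro k' _
    rw [Emat_mul]
    by_cases hkk : k = k' <;> simp [hkk]
  rw [Finset.sum_congr rfl key, Finset.sum_ite_eq, if_pos hk,
    rhoHat_left σ (mem_class_s g hg hk)]

lemma geBS_mul_pvB_inl (e : G.E) :
    geBS σ g e * (∑ k ∈ G.classFinset (g (G.s e)), Emat K (inl k) (inl k) (σ.pw (G.r k)))
      = geBS σ g e := by
  unfold geBS
  rw [Finset.sum_mul_sum]
  refine Finset.sum_congr rfl fun k hk => ?_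
  have key : ∀ k' ∈ G.classFinset (g (G.s e)),
      Emat K (inr (G.r e)) (inl k) (rhoHat σ e k) * Emat K (inl k') (inl k') (σ.pw (G.r k'))
      = if k = k' then Emat K (inr (G.r e)) (inl k') (rhoHat σ e k * σ.pw (G.r k'))
        else 0 := by
    intro k' _
    rw [Emat_mul]
    by_cases hkk : k = k' <;> simp [hkk]
  rw [Finset.sum_congr rfl key, Finset.sum_ite_eq, if_pos hk,
    rhoHat_right σ (mem_class_s g hg hk).symm]

lemma pvB_inl_idem (v : G.V0) :
    (∑ k ∈ G.classFinset (g v), Emat K (inl k : G.E ⊕ G.V1) (inl k) (σ.pw (G.r k))) *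
      (∑ k ∈ G.classFinset (g v), Emat K (inl k) (inl k) (σ.pw (G.r k)))
    = ∑ k ∈ G.classFinset (g v), Emat K (inl k) (inl k) (σ.pw (G.r k)) := by
  rw [Finset.sum_mul_sum]
  refine Finset.sum_congr rfl fun k hk => ?_
  have key : ∀ k' ∈ G.classFinset (g v),
      Emat K (inl k : G.E ⊕ G.V1) (inl k) (σ.pw (G.r k)) * Emat K (inl k') (inl k') (σ.pw (G.r k'))
      = if k = k' then Emat K (inl k) (inl k') (σ.pw (G.r k) * σ.pw (G.r k')) else 0 := by
    intro k' _
    rw [Emat_mul]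
    by_cases hkk : k = k' <;> simp [hkk]
  rw [Finset.sum_congr rfl key, Finset.sum_ite_eq, if_pos hk, σ.pw_idem]

lemma sck2B (e : G.E) :
    ∑ f ∈ G.classFinset e, geBT σ g f * geBS σ g f =
      ∑ k ∈ G.classFinset (g (G.s e)), Emat K (inl k) (inl k) (σ.pw (G.r k)) := by
  have step1 : ∀ f ∈ G.classFinset e, geBT σ g f * geBS σ g f =
      ∑ k ∈ G.classFinset (g (G.s e)), ∑ k' ∈ G.classFinset (g (G.s e)),
        Emat K (inl k) (inl k') (rhoHat σ k f * rhoHat σ f k') := by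
    intro f hf
    rw [geBT_mul_geBS σ g f, s_of_mem_classFinset hf]
  rw [Finset.sum_congr rfl step1, Finset.sum_comm]
  refine Finset.sum_congr rfl fun k hk => ?_
  rw [Finset.sum_comm]
  have step2 : ∀ k' ∈ G.classFinset (g (G.s e)),
      ∑ f ∈ G.classFinset e, Emat K (inl k : G.E ⊕ G.V1) (inl k') (rhoHat σ k f * rhoHat σ f k')
      = if k = k' then Emat K (inl k) (inl k') (σ.pw (G.r k)) else 0 := by
    intro k' hk'
    rw [Emat_sum, hub_sum σ ((mem_class_s g hg hk).trans (mem_class_s g hg hk').symm)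
      (mem_class_s g hg hk).symm]
    by_cases hkk : k = k'
    · subst hkk
      rw [rhoHat_self σ, if_pos rfl]
    · rw [rhoHat_of_c σ (c_trans (c_symm (mem_classFinset.mp hk)) (mem_classFinset.mp hk'))
        hkk, Emat_zero, if_neg hkk]
  rw [Finset.sum_congr rfl step2, Finset.sum_ite_eq, if_pos hk]

/-- The LPA representation built from an LW representation by finite matrices. -/
def sigmaB : LPARep K G (StarOp K ((G.E ⊕ G.V1) →₀ A)) where
  pv := pvB σ g
  ge := geB σ g
  pv_star u := by cases u <;> rfl
  pv_idem u := by
    cases u with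
    | inl v => exact StarOp.ext (pvB_inl_idem σ g hg v) (pvB_inl_idem σ g hg v)
    | inr w =>
        have main : Emat K (inr w : G.E ⊕ G.V1) (inr w) (σ.pw w) *
            Emat K (inr w) (inr w) (σ.pw w) = Emat K (inr w) (inr w) (σ.pw w) := by
          rw [Emat_mul, if_pos rfl, σ.pw_idem]
        exact StarOp.ext main main
  pv_orth u u' huu := by
    cases u with
    | inl v =>
      cases u' with
      | inl v' =>
          have hvv : v ≠ v' := fun h => huu (by rw [h])
          have main : (∑ k ∈ G.classFinset (g v), Emat K (inl k : G.E ⊕ G.V1) (inl k) (σ.pw (G.r k))) *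
              (∑ k ∈ G.classFinset (g v'), Emat K (inl k) (inl k) (σ.pw (G.r k)))
              = (0 : Module.End K ((G.E ⊕ G.V1) →₀ A)) := by
            rw [Finset.sum_mul_sum]
            refine Finset.sum_eq_zero fun k hk => Finset.sum_eq_zero fun k' hk' => ?_
            rw [Emat_mul, if_neg]
            intro hkk
            injection hkk with hkk
            exact hvv ((mem_class_s g hg hk).symm.trans (hkk ▸ mem_class_s g hg hk'))
          have main' : (∑ k ∈ G.classFinset (g v'), Emat K (inl k : G.E ⊕ G.V1) (inl k) (σ.pw (G.r k))) *
              (∑ k ∈ G.classFinset (g v), Emat K (inl k) (inl k) (σ.pw (G.r k)))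
              = (0 : Module.End K ((G.E ⊕ G.V1) →₀ A)) := by
            rw [Finset.sum_mul_sum]
            refine Finset.sum_eq_zero fun k hk => Finset.sum_eq_zero fun k' hk' => ?_
            rw [Emat_mul, if_neg]
            intro hkk
            injection hkk with hkk
            exact hvv ((mem_class_s g hg hk).symm.trans (hkk ▸ mem_class_s g hg hk')).symm
          exact StarOp.ext main main'
      | inr w =>
          have main : (∑ k ∈ G.classFinset (g v), Emat K (inl k : G.E ⊕ G.V1) (inl k) (σ.pw (G.r k))) *
              Emat K (inr w) (inr w) (σ.pw w) = (0 : Module.End K ((G.E ⊕ G.V1) →₀ A)) := by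
            rw [Finset.sum_mul]
            refine Finset.sum_eq_zero fun k hk => ?_
            rw [Emat_mul, if_neg (by simp)]
          have main' : Emat K (inr w : G.E ⊕ G.V1) (inr w) (σ.pw w) *
              (∑ k ∈ G.classFinset (g v), Emat K (inl k) (inl k) (σ.pw (G.r k)))
              = (0 : Module.End K ((G.E ⊕ G.V1) →₀ A)) := by
            rw [Finset.mul_sum]
            refine Finset.sum_eq_zero fun k hk => ?_
            rw [Emat_mul, if_neg (by simp)]
          exact StarOp.ext main main'
    | inr w =>
      cases u' with
      | inl v =>
          have main : Emat K (inr w : G.E ⊕ G.V1) (inr w) (σ.pw w) *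
              (∑ k ∈ G.classFinset (g v), Emat K (inl k) (inl k) (σ.pw (G.r k)))
              = (0 : Module.End K ((G.E ⊕ G.V1) →₀ A)) := by
            rw [Finset.mul_sum]
            refine Finset.sum_eq_zero fun k hk => ?_
            rw [Emat_mul, if_neg (by simp)]
          have main' : (∑ k ∈ G.classFinset (g v), Emat K (inl k : G.E ⊕ G.V1) (inl k) (σ.pw (G.r k))) *
              Emat K (inr w) (inr w) (σ.pw w) = (0 : Module.End K ((G.E ⊕ G.V1) →₀ A)) := by
            rw [Finset.sum_mul]
            refine Finset.sum_eq_zero fun k hk => ?_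
            rw [Emat_mul, if_neg (by simp)]
          exact StarOp.ext main main'
      | inr w' =>
          have hww : w ≠ w' := fun h => huu (by rw [h])
          have main : Emat K (inr w : G.E ⊕ G.V1) (inr w) (σ.pw w) *
              Emat K (inr w') (inr w') (σ.pw w') = (0 : Module.End K ((G.E ⊕ G.V1) →₀ A)) := by
            rw [Emat_mul, if_neg (by simp [hww])]
          have main' : Emat K (inr w' : G.E ⊕ G.V1) (inr w') (σ.pw w') *
              Emat K (inr w) (inr w) (σ.pw w) = (0 : Module.End K ((G.E ⊕ G.V1) →₀ A)) := by
            rw [Emat_mul, if_neg (by simp [Ne.symm hww])]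
          exact StarOp.ext main main'
  src_mul e :=
    StarOp.ext (pvB_inl_mul_geBT σ g hg e) (geBS_mul_pvB_inl σ g hg e)
  mul_rng e := by
    refine StarOp.ext ?_ ?_
    · show geBT σ g e * Emat K (inr (G.r e)) (inr (G.r e)) (σ.pw (G.r e)) = geBT σ g e
      unfold geBT
      rw [Finset.sum_mul]
      refine Finset.sum_congr rfl fun k hk => ?_
      rw [Emat_mul, if_pos rfl, rhoHat_right σ (mem_class_s g hg hk)]
    · show Emat K (inr (G.r e)) (inr (G.r e)) (σ.pw (G.r e)) * geBS σ g e = geBS σ g e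
      unfold geBS
      rw [Finset.mul_sum]
      refine Finset.sum_congr rfl fun k hk => ?_
      rw [Emat_mul, if_pos rfl, rhoHat_left σ (mem_class_s g hg hk).symm]
  sck1 e f hef := by
    have hs : G.s e = G.s f := G.c_src hef
    by_cases hef' : e = f
    · subst hef'
      rw [if_pos rfl]
      refine StarOp.ext ?_ ?_ <;>
      · show geBS σ g e * geBT σ g e = Emat K (inr (G.r e)) (inr (G.r e)) (σ.pw (G.r e))
        rw [geBS_mul_geBT σ g hg rfl, rhoHat_self σ]
    · rw [if_neg hef']
      refine StarOp.ext ?_ ?_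
      · show geBS σ g e * geBT σ g f = (0 : Module.End K ((G.E ⊕ G.V1) →₀ A))
        rw [geBS_mul_geBT σ g hg hs, rhoHat_of_c σ hef hef', Emat_zero]
      · show geBS σ g f * geBT σ g e = (0 : Module.End K ((G.E ⊕ G.V1) →₀ A))
        rw [geBS_mul_geBT σ g hg hs.symm, rhoHat_of_c σ (c_symm hef) (Ne.symm hef'), Emat_zero]
  sck2 e := by
    refine StarOp.ext ?_ ?_
    · show (∑ f ∈ G.classFinset e, geB σ g f * star (geB σ g f)).T = _
      rw [StarOp.sum_T]
      exact sck2B σ g hg e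
    · show (∑ f ∈ G.classFinset e, geB σ g f * star (geB σ g f)).S = _
      rw [StarOp.sum_S]
      exact sck2B σ g hg e

end MatRep


section AdjoinTop

variable {G : BipSepGraph} {L : Type} [NonUnitalRing L] [Module K L]
  [SMulCommClass K L L] [IsScalarTower K L L] [StarRing L] [StarModule K L]

/-- The canonical generators of the Leavitt path algebra. -/
def gensL (ρ : LPARep K G L) : Set L :=
  {x | (∃ u, x = ρ.pv u) ∨ (∃ e, x = ρ.ge e) ∨ (∃ e, x = star (ρ.ge e))}

variable (ρ : LPARep K G L)

/-- The representation of the LPA relations inside the star subalgebra generated by the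
canonical generators. -/
def rhoAdj : LPARep K G (NonUnitalStarAlgebra.adjoin K (gensL ρ)) where
  pv u := ⟨ρ.pv u, NonUnitalStarAlgebra.subset_adjoin K _ (Or.inl ⟨u, rfl⟩)⟩
  ge e := ⟨ρ.ge e, NonUnitalStarAlgebra.subset_adjoin K _ (Or.inr (Or.inl ⟨e, rfl⟩))⟩
  pv_star u := Subtype.ext (by simpa using ρ.pv_star u)
  pv_idem u := Subtype.ext (by simpa using ρ.pv_idem u)
  pv_orth u u' h := Subtype.ext (by simpa using ρ.pv_orth u u' h)
  src_mul e := Subtype.ext (by simpa using ρ.src_mul e)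
  mul_rng e := Subtype.ext (by simpa using ρ.mul_rng e)
  sck1 e f hc := by
    by_cases hef : e = f
    · subst hef
      rw [if_pos rfl]
      exact Subtype.ext (by simpa using ρ.sck1 e e hc)
    · rw [if_neg hef]
      exact Subtype.ext (by simpa [hef] using ρ.sck1 e f hc)
  sck2 e := Subtype.ext (by
    push_cast
    simpa using ρ.sck2 e)

lemma mem_adjoin_gensL (hL : IsLPA K G L ρ) (x : L) :
    x ∈ NonUnitalStarAlgebra.adjoin K (gensL ρ) := by
  obtain ⟨θ, hθ, -⟩ := hL (NonUnitalStarAlgebra.adjoin K (gensL ρ)) (rhoAdj ρ)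
  have huniq := hL L ρ
  have h1 : (NonUnitalStarSubalgebraClass.subtype
      (NonUnitalStarAlgebra.adjoin K (gensL ρ))).comp θ = NonUnitalStarAlgHom.id K L := by
    obtain ⟨Φ, -, hu⟩ := huniq
    have e1 := hu ((NonUnitalStarSubalgebraClass.subtype _).comp θ)
      ⟨fun u => by simp [hθ.1 u, rhoAdj], fun e => by simp [hθ.2 e, rhoAdj]⟩
    have e2 := hu (NonUnitalStarAlgHom.id K L) ⟨fun u => rfl, fun e => rfl⟩
    rw [e1, e2]
  have : (NonUnitalStarSubalgebraClass.subtype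
      (NonUnitalStarAlgebra.adjoin K (gensL ρ))).comp θ x = x := by rw [h1]; rfl
  rw [← this]
  exact (θ x).2

lemma gensL_star_subset {x : L} (hx : x ∈ gensL ρ) : star x ∈ gensL ρ := by
  rcases hx with ⟨u, hx⟩ | ⟨e, hx⟩ | ⟨e, hx⟩ <;> subst hx
  · exact Or.inl ⟨u, ρ.pv_star u⟩
  · exact Or.inr (Or.inr ⟨e, rfl⟩)
  · exact Or.inr (Or.inl ⟨e, star_star (ρ.ge e)⟩)

lemma mem_span_closure_gensL (hL : IsLPA K G L ρ) (x : L) :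
    x ∈ Submodule.span K (Subsemigroup.closure (gensL ρ) : Set L) := by
  have h1 := mem_adjoin_gensL ρ hL x
  have h2 : x ∈ NonUnitalAlgebra.adjoin K (gensL ρ) := by
    have hsub : gensL ρ ∪ star (gensL ρ) ⊆
        (NonUnitalAlgebra.adjoin K (gensL ρ) : Set L) := by
      rintro y (hy | hy)
      · exact NonUnitalAlgebra.subset_adjoin K hy
      · have hy' : star y ∈ gensL ρ := hy
        have hy'' := gensL_star_subset ρ hy'
        rw [star_star] at hy''
        exact NonUnitalAlgebra.subset_adjoin K hy''
    have := NonUnitalStarAlgebra.adjoin_toNonUnitalSubalgebra K (gensL ρ)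
    have hmem : x ∈ NonUnitalAlgebra.adjoin K (gensL ρ ∪ star (gensL ρ)) := by
      rw [← this]
      exact h1
    exact NonUnitalAlgebra.adjoin_le hsub hmem
  have h3 := NonUnitalAlgebra.adjoin_eq_span (R := K) (gensL ρ)
  have : x ∈ (NonUnitalAlgebra.adjoin K (gensL ρ)).toSubmodule := h2
  rw [h3] at this
  exact this

end AdjoinTop

section AdjoinTopLW

variable {G : BipSepGraph} {A : Type} [NonUnitalRing A] [Module K A]
  [SMulCommClass K A A] [IsScalarTower K A A] [StarRing A] [StarModule K A]

/-- The canonical generators of the lower Leavitt path algebra. -/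
def gensLW (σ : LWRep K G A) : Set A :=
  {x | (∃ w, x = σ.pw w) ∨ (∃ e f, G.s e = G.s f ∧ ¬ G.c e f ∧ x = σ.rho e f)}

variable (σ : LWRep K G A)

/-- The `p_w` generators inside the star subalgebra generated by the canonical generators. -/
def pwAdjLW (w : G.V1) : NonUnitalStarAlgebra.adjoin K (gensLW σ) :=
  ⟨σ.pw w, NonUnitalStarAlgebra.subset_adjoin K _ (Or.inl ⟨w, rfl⟩)⟩

/-- The `ρ(e,f)` generators inside the star subalgebra generated by the canonical
generators. -/
def rhoAdjLW (e f : G.E) : NonUnitalStarAlgebra.adjoin K (gensLW σ) :=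
  if h : G.s e = G.s f ∧ ¬ G.c e f then
    ⟨σ.rho e f, NonUnitalStarAlgebra.subset_adjoin K _ (Or.inr ⟨e, f, h.1, h.2, rfl⟩)⟩ else 0

@[simp] lemma coe_pwAdjLW (w : G.V1) : (pwAdjLW σ w : A) = σ.pw w := rfl

lemma coe_rhoAdjLW {e f : G.E} (h1 : G.s e = G.s f) (h2 : ¬ G.c e f) :
    (rhoAdjLW σ e f : A) = σ.rho e f := by
  rw [rhoAdjLW, dif_pos ⟨h1, h2⟩]

/-- The representation of the LW relations inside the star subalgebra generated by the
canonical generators. -/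
def sigmaAdj : LWRep K G (NonUnitalStarAlgebra.adjoin K (gensLW σ)) where
  pw := pwAdjLW σ
  rho := rhoAdjLW σ
  pw_star w := Subtype.ext (by simpa using σ.pw_star w)
  pw_idem w := Subtype.ext (by simpa using σ.pw_idem w)
  pw_orth w w' h := Subtype.ext (by simpa using σ.pw_orth w w' h)
  rho_star e f h1 h2 := by
    refine Subtype.ext ?_
    have hco : ((star (rhoAdjLW σ e f) : NonUnitalStarAlgebra.adjoin K (gensLW σ)) : A)
        = star ((rhoAdjLW σ e f : A)) := rfl
    rw [hco, coe_rhoAdjLW σ h1 h2, coe_rhoAdjLW σ h1.symm (fun hx => h2 (c_symm hx))]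
    exact σ.rho_star e f h1 h2
  rho_right e f h1 h2 := by
    refine Subtype.ext ?_
    have : ((rhoAdjLW σ e f * pwAdjLW σ (G.r f) :
        NonUnitalStarAlgebra.adjoin K (gensLW σ)) : A)
        = (rhoAdjLW σ e f : A) * σ.pw (G.r f) := rfl
    rw [this, coe_rhoAdjLW σ h1 h2]
    exact σ.rho_right e f h1 h2
  rho_left e f h1 h2 := by
    refine Subtype.ext ?_
    have : ((pwAdjLW σ (G.r e) * rhoAdjLW σ e f :
        NonUnitalStarAlgebra.adjoin K (gensLW σ)) : A)
        = σ.pw (G.r e) * (rhoAdjLW σ e f : A) := rfl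
    rw [this, coe_rhoAdjLW σ h1 h2]
    exact σ.rho_left e f h1 h2
  sck1 e h g h1 h2 h3 h4 := by
    have hterm : ∀ f ∈ G.classFinset g,
        G.s e = G.s f ∧ ¬ G.c e f := by
      intro f hf
      have hcf : G.c g f := mem_classFinset.mp hf
      exact ⟨h2.symm.trans (G.c_src hcf), fun hx => h3 (c_symm (c_trans hx (c_symm hcf)))⟩
    have hterm' : ∀ f ∈ G.classFinset g,
        G.s f = G.s h ∧ ¬ G.c f h := by
      intro f hf
      have hcf : G.c g f := mem_classFinset.mp hf
      exact ⟨(G.c_src hcf).symm.trans (h2.trans h1), fun hx => h4 (c_trans hcf hx)⟩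
    refine Subtype.ext ?_
    have hsum : ∀ f ∈ G.classFinset g,
        ((rhoAdjLW σ e f * rhoAdjLW σ f h : NonUnitalStarAlgebra.adjoin K (gensLW σ)) : A)
        = σ.rho e f * σ.rho f h := by
      intro f hf
      have : ((rhoAdjLW σ e f * rhoAdjLW σ f h :
          NonUnitalStarAlgebra.adjoin K (gensLW σ)) : A)
          = (rhoAdjLW σ e f : A) * (rhoAdjLW σ f h : A) := rfl
      rw [this, coe_rhoAdjLW σ (hterm f hf).1 (hterm f hf).2,
        coe_rhoAdjLW σ (hterm' f hf).1 (hterm' f hf).2]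
    rw [AddSubmonoidClass.coe_finset_sum, Finset.sum_congr rfl hsum, σ.sck1 e h g h1 h2 h3 h4]
    by_cases hc : G.c e h
    · rw [if_pos hc, if_pos hc]
      by_cases heh : e = h
      · subst heh
        rw [if_pos rfl, if_pos rfl]
        rfl
      · rw [if_neg heh, if_neg heh]
        rfl
    · rw [if_neg hc, if_neg hc, coe_rhoAdjLW σ h1 hc]

lemma mem_adjoin_gensLW (hLW : IsLW K G A σ) (x : A) :
    x ∈ NonUnitalStarAlgebra.adjoin K (gensLW σ) := by
  obtain ⟨θ, hθ, -⟩ := hLW (NonUnitalStarAlgebra.adjoin K (gensLW σ)) (sigmaAdj σ)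
  have huniq := hLW A σ
  have h1 : (NonUnitalStarSubalgebraClass.subtype
      (NonUnitalStarAlgebra.adjoin K (gensLW σ))).comp θ = NonUnitalStarAlgHom.id K A := by
    obtain ⟨Φ, -, hu⟩ := huniq
    have e1 := hu ((NonUnitalStarSubalgebraClass.subtype _).comp θ)
      ⟨fun w => by simp [hθ.1 w, sigmaAdj],
       fun e f hs hc => by
        have := hθ.2 e f hs hc
        simp only [NonUnitalStarAlgHom.comp_apply, this, sigmaAdj]
        exact coe_rhoAdjLW σ hs hc⟩
    have e2 := hu (NonUnitalStarAlgHom.id K A) ⟨fun w => rfl, fun e f _ _ => rfl⟩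
    rw [e1, e2]
  have : (NonUnitalStarSubalgebraClass.subtype
      (NonUnitalStarAlgebra.adjoin K (gensLW σ))).comp θ x = x := by rw [h1]; rfl
  rw [← this]
  exact (θ x).2

lemma gensLW_star_subset {x : A} (hx : x ∈ gensLW σ) : star x ∈ gensLW σ := by
  rcases hx with ⟨w, rfl⟩ | ⟨e, f, h1, h2, rfl⟩
  · exact Or.inl ⟨w, σ.pw_star w⟩
  · exact Or.inr ⟨f, e, h1.symm, fun hx => h2 (c_symm hx), σ.rho_star e f h1 h2⟩

lemma mem_span_closure_gensLW (hLW : IsLW K G A σ) (x : A) :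
    x ∈ Submodule.span K (Subsemigroup.closure (gensLW σ) : Set A) := by
  have h1 := mem_adjoin_gensLW σ hLW x
  have h2 : x ∈ NonUnitalAlgebra.adjoin K (gensLW σ) := by
    have hsub : gensLW σ ∪ star (gensLW σ) ⊆
        (NonUnitalAlgebra.adjoin K (gensLW σ) : Set A) := by
      rintro y (hy | hy)
      · exact NonUnitalAlgebra.subset_adjoin K hy
      · have hy' : star y ∈ gensLW σ := hy
        have hy'' := gensLW_star_subset σ hy'
        rw [star_star] at hy''
        exact NonUnitalAlgebra.subset_adjoin K hy''
    have heq := NonUnitalStarAlgebra.adjoin_toNonUnitalSubalgebra K (gensLW σ)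
    have hmem : x ∈ NonUnitalAlgebra.adjoin K (gensLW σ ∪ star (gensLW σ)) := by
      rw [← heq]
      exact h1
    exact NonUnitalAlgebra.adjoin_le hsub hmem
  have h3 := NonUnitalAlgebra.adjoin_eq_span (R := K) (gensLW σ)
  have : x ∈ (NonUnitalAlgebra.adjoin K (gensLW σ)).toSubmodule := h2
  rw [h3] at this
  exact this

end AdjoinTopLW


section PhiConstruction

variable {G : BipSepGraph} {L : Type} [NonUnitalRing L] [Module K L]
  [SMulCommClass K L L] [IsScalarTower K L L] [StarRing L] [StarModule K L]
  (ρ : LPARep K G L)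

/-- The corner `W L W` as a submodule. -/
def Msp : Submodule K L :=
  Submodule.span K {x : L | ∃ (u w : G.V1) (a : L), x = ρ.pv (inr u) * a * ρ.pv (inr w)}

lemma Msp_mul_mem {x y : L} (hx : x ∈ Msp ρ) (hy : y ∈ Msp ρ) : x * y ∈ Msp ρ := by
  induction hx using Submodule.span_induction generalizing y with
  | mem x hx =>
      obtain ⟨u, w, a, rfl⟩ := hx
      induction hy using Submodule.span_induction with
      | mem y hy =>
          obtain ⟨u', w', a', rfl⟩ := hy
          refine Submodule.subset_span ⟨u, w', a * ρ.pv (inr w) * (ρ.pv (inr u') * a'), ?_⟩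
          simp only [mul_assoc]
      | zero => simp
      | add y z _ _ hy hz => rw [mul_add]; exact add_mem hy hz
      | smul k y _ hy => rw [mul_smul_comm]; exact Submodule.smul_mem _ k hy
  | zero => simp
  | add x z _ _ hx hz => rw [add_mul]; exact add_mem (hx hy) (hz hy)
  | smul k x _ hx => rw [smul_mul_assoc]; exact Submodule.smul_mem _ k (hx hy)

lemma Msp_star_mem {x : L} (hx : x ∈ Msp ρ) : star x ∈ Msp ρ := by
  induction hx using Submodule.span_induction with
  | mem x hx =>
      obtain ⟨u, w, a, rfl⟩ := hx
      refine Submodule.subset_span ⟨w, u, star a, ?_⟩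
      rw [star_mul, star_mul, ρ.pv_star, ρ.pv_star, mul_assoc]
  | zero => simp
  | add x y _ _ hx hy => rw [star_add]; exact add_mem hx hy
  | smul k x _ hx => rw [star_smul]; exact Submodule.smul_mem _ (star k) hx

/-- The corner `W L W` as a non-unital star subalgebra. -/
def MspSub : NonUnitalStarSubalgebra K L where
  carrier := Msp ρ
  add_mem' := add_mem
  zero_mem' := zero_mem _
  smul_mem' k x hx := Submodule.smul_mem _ k hx
  mul_mem' := Msp_mul_mem ρ
  star_mem' := Msp_star_mem ρ

lemma pvW_mem (w : G.V1) : ρ.pv (inr w) ∈ Msp ρ := by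
  refine Submodule.subset_span ⟨w, w, ρ.pv (inr w), ?_⟩
  rw [ρ.pv_idem, ρ.pv_idem]

lemma star_ge_mul_ge_mem (e f : G.E) : star (ρ.ge e) * ρ.ge f ∈ Msp ρ := by
  refine Submodule.subset_span ⟨G.r e, G.r f, star (ρ.ge e) * ρ.ge f, ?_⟩
  rw [← mul_assoc, star_ge_eq_pv_mul ρ e, mul_assoc, ρ.mul_rng f]

/-- The `p_w` generators inside the corner. -/
def pwW (w : G.V1) : MspSub ρ := ⟨ρ.pv (inr w), pvW_mem ρ w⟩

/-- The `ρ(e,f)` generators inside the corner. -/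
def rhoW (e f : G.E) : MspSub ρ := ⟨star (ρ.ge e) * ρ.ge f, star_ge_mul_ge_mem ρ e f⟩

@[simp] lemma coe_pwW (w : G.V1) : (pwW ρ w : L) = ρ.pv (inr w) := rfl

@[simp] lemma coe_rhoW (e f : G.E) : (rhoW ρ e f : L) = star (ρ.ge e) * ρ.ge f := rfl

/-- The representation of the LW relations inside the corner. -/
def sigmaW : LWRep K G (MspSub ρ) where
  pw := pwW ρ
  rho := rhoW ρ
  pw_star w := Subtype.ext (by simpa using ρ.pv_star (inr w))
  pw_idem w := Subtype.ext (by simpa using ρ.pv_idem (inr w))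
  pw_orth w w' h := Subtype.ext
    (by simpa using ρ.pv_orth (inr w) (inr w') (fun hx => h (by injection hx)))
  rho_star e f h1 h2 := Subtype.ext (by
    show star (star (ρ.ge e) * ρ.ge f) = star (ρ.ge f) * ρ.ge e
    rw [star_mul, star_star])
  rho_right e f h1 h2 := Subtype.ext (by
    show star (ρ.ge e) * ρ.ge f * ρ.pv (inr (G.r f)) = star (ρ.ge e) * ρ.ge f
    rw [mul_assoc, ρ.mul_rng f])
  rho_left e f h1 h2 := Subtype.ext (by
    show ρ.pv (inr (G.r e)) * (star (ρ.ge e) * ρ.ge f) = star (ρ.ge e) * ρ.ge f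
    rw [← mul_assoc, star_ge_eq_pv_mul ρ e])
  sck1 e h g h1 h2 h3 h4 := by
    have key : ((∑ f ∈ G.classFinset g, rhoW ρ e f * rhoW ρ f h : MspSub ρ) : L)
        = star (ρ.ge e) * ρ.ge h := by
      rw [AddSubmonoidClass.coe_finset_sum]
      have step : ∀ f ∈ G.classFinset g, ((rhoW ρ e f * rhoW ρ f h : MspSub ρ) : L)
          = star (ρ.ge e) * (ρ.ge f * star (ρ.ge f)) * ρ.ge h := by
        intro f _
        show star (ρ.ge e) * ρ.ge f * (star (ρ.ge f) * ρ.ge h) = _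
        simp only [mul_assoc]
      rw [Finset.sum_congr rfl step, ← Finset.sum_mul, ← Finset.mul_sum, ρ.sck2 g,
        show G.s g = G.s e from h2, star_ge_eq_mul_pv ρ e]
    by_cases hc : G.c e h
    · rw [if_pos hc]
      by_cases heh : e = h
      · subst heh
        rw [if_pos rfl]
        refine Subtype.ext ?_
        rw [key]
        simpa using ρ.sck1 e e hc
      · rw [if_neg heh]
        refine Subtype.ext ?_
        rw [key]
        simpa [heh] using ρ.sck1 e h hc
    · rw [if_neg hc]
      exact Subtype.ext key

end PhiConstruction


section RangeSurj

variable {G : BipSepGraph} {L : Type} [NonUnitalRing L] [Module K L]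
  [SMulCommClass K L L] [IsScalarTower K L L] [StarRing L] [StarModule K L]
  {A : Type} [NonUnitalRing A] [Module K A]
  [SMulCommClass K A A] [IsScalarTower K A A] [StarRing A] [StarModule K A]

/-- The range of a star algebra homomorphism, as a submodule. -/
def rangeSub (φ : A →⋆ₙₐ[K] L) : Submodule K L where
  carrier := Set.range φ
  add_mem' := by
    rintro x y ⟨a, rfl⟩ ⟨b, rfl⟩
    exact ⟨a + b, map_add φ a b⟩
  zero_mem' := ⟨0, map_zero φ⟩
  smul_mem' := by
    rintro k x ⟨a, rfl⟩
    exact ⟨k • a, map_smul φ k a⟩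

lemma rangeSub_mul_mem (φ : A →⋆ₙₐ[K] L) {x y : L}
    (hx : x ∈ rangeSub φ) (hy : y ∈ rangeSub φ) : x * y ∈ rangeSub φ := by
  obtain ⟨a, rfl⟩ := hx
  obtain ⟨b, rfl⟩ := hy
  exact ⟨a * b, map_mul φ a b⟩

variable (ρ : LPARep K G L)

/-- Left multipliers used in the corner-range induction. -/
def Lop : G.V1 ⊕ G.E → L
  | inl u => ρ.pv (inr u)
  | inr e => star (ρ.ge e)

/-- Right multipliers used in the corner-range induction. -/
def Rop : G.V1 ⊕ G.E → L
  | inl w => ρ.pv (inr w)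
  | inr f => ρ.ge f

variable {σ : LWRep K G A} {φ : A →⋆ₙₐ[K] L}
  (hφpw : ∀ w, φ (σ.pw w) = ρ.pv (inr w))
  (hφrho : ∀ e f, G.s e = G.s f → ¬ G.c e f → φ (σ.rho e f) = star (ρ.ge e) * ρ.ge f)

include hφpw in
lemma pv_mem_range (w : G.V1) : ρ.pv (inr w) ∈ rangeSub φ := ⟨σ.pw w, hφpw w⟩

include hφpw hφrho in
lemma star_ge_ge_mem_range (e f : G.E) : star (ρ.ge e) * ρ.ge f ∈ rangeSub φ := by
  by_cases hs : G.s e = G.s f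
  · by_cases hc : G.c e f
    · rw [ρ.sck1 e f hc]
      by_cases hef : e = f
      · subst hef
        rw [if_pos rfl]
        exact pv_mem_range ρ hφpw (G.r e)
      · rw [if_neg hef]
        exact zero_mem _
    · exact ⟨σ.rho e f, hφrho e f hs hc⟩
  · rw [star_ge_mul_ge_of_ne ρ hs]
    exact zero_mem _

include hφpw hφrho in
lemma LopRop_mem_range (p q : G.V1 ⊕ G.E) : Lop ρ p * Rop ρ q ∈ rangeSub φ := by
  cases p with
  | inl u =>
    cases q with
    | inl w =>
        show ρ.pv (inr u) * ρ.pv (inr w) ∈ _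
        rw [pv_mul_pv]
        split
        · exact pv_mem_range ρ hφpw u
        · exact zero_mem _
    | inr f =>
        show ρ.pv (inr u) * ρ.ge f ∈ _
        rw [pv_mul_ge, if_neg (by simp)]
        exact zero_mem _
  | inr e =>
    cases q with
    | inl w =>
        show star (ρ.ge e) * ρ.pv (inr w) ∈ _
        rw [star_ge_mul_pv, if_neg (by simp)]
        exact zero_mem _
    | inr f => exact star_ge_ge_mem_range ρ hφpw hφrho e f

include hφpw hφrho in
lemma gensL_sandwich_mem (x : L) (hx : x ∈ gensL ρ) (p q : G.V1 ⊕ G.E) :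
    Lop ρ p * x * Rop ρ q ∈ rangeSub φ := by
  rcases hx with ⟨u₀, hx⟩ | ⟨e, hx⟩ | ⟨e, hx⟩ <;> subst hx
  · -- x = pv u₀ : absorb into Lop
    cases p with
    | inl u =>
        show ρ.pv (inr u) * ρ.pv u₀ * Rop ρ q ∈ _
        rw [pv_mul_pv]
        split
        · exact LopRop_mem_range ρ hφpw hφrho (inl u) q
        · rw [zero_mul]; exact zero_mem _
    | inr e =>
        show star (ρ.ge e) * ρ.pv u₀ * Rop ρ q ∈ _
        rw [star_ge_mul_pv]
        split
        · exact LopRop_mem_range ρ hφpw hφrho (inr e) q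
        · rw [zero_mul]; exact zero_mem _
  · -- x = ge e
    cases p with
    | inl u =>
        show ρ.pv (inr u) * ρ.ge e * Rop ρ q ∈ _
        rw [pv_mul_ge, if_neg (by simp), zero_mul]
        exact zero_mem _
    | inr e' =>
        show star (ρ.ge e') * ρ.ge e * Rop ρ q ∈ _
        cases q with
        | inl w =>
            show star (ρ.ge e') * ρ.ge e * ρ.pv (inr w) ∈ _
            rw [mul_assoc, ge_mul_pv]
            split
            · exact star_ge_ge_mem_range ρ hφpw hφrho e' e
            · rw [mul_zero]; exact zero_mem _
        | inr f =>
            show star (ρ.ge e') * ρ.ge e * ρ.ge f ∈ _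
            rw [mul_assoc, ge_mul_ge, mul_zero]
            exact zero_mem _
  · -- x = star (ge e)
    cases p with
    | inl u =>
        show ρ.pv (inr u) * star (ρ.ge e) * Rop ρ q ∈ _
        rw [pv_mul_star_ge]
        split
        · exact LopRop_mem_range ρ hφpw hφrho (inr e) q
        · rw [zero_mul]; exact zero_mem _
    | inr e' =>
        show star (ρ.ge e') * star (ρ.ge e) * Rop ρ q ∈ _
        rw [star_ge_mul_star_ge, zero_mul]
        exact zero_mem _

include hφpw hφrho in
lemma gensL_stable (x : L) (hx : x ∈ gensL ρ) (m : L)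
    (hm : ∀ p q, Lop ρ p * m * Rop ρ q ∈ rangeSub φ) (p q : G.V1 ⊕ G.E) :
    Lop ρ p * (m * x) * Rop ρ q ∈ rangeSub φ := by
  have hassoc : Lop ρ p * (m * x) * Rop ρ q = Lop ρ p * m * (x * Rop ρ q) := by
    simp only [mul_assoc]
  rw [hassoc]
  rcases hx with ⟨u₀, hx⟩ | ⟨e, hx⟩ | ⟨e, hx⟩ <;> subst hx
  · cases q with
    | inl w =>
        rw [show ρ.pv u₀ * Rop ρ (inl w) = ρ.pv u₀ * ρ.pv (inr w) from rfl, pv_mul_pv]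
        split_ifs with h
        · rw [h]; exact hm p (inl w)
        · rw [mul_zero]; exact zero_mem _
    | inr f =>
        rw [show ρ.pv u₀ * Rop ρ (inr f) = ρ.pv u₀ * ρ.ge f from rfl, pv_mul_ge]
        split_ifs with h
        · exact hm p (inr f)
        · rw [mul_zero]; exact zero_mem _
  · cases q with
    | inl w =>
        rw [show ρ.ge e * Rop ρ (inl w) = ρ.ge e * ρ.pv (inr w) from rfl, ge_mul_pv]
        split_ifs with h
        · exact hm p (inr e)
        · rw [mul_zero]; exact zero_mem _
    | inr f =>
        rw [show ρ.ge e * Rop ρ (inr f) = ρ.ge e * ρ.ge f from rfl, ge_mul_ge, mul_zero]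
        exact zero_mem _
  · cases q with
    | inl w =>
        rw [show star (ρ.ge e) * Rop ρ (inl w) = star (ρ.ge e) * ρ.pv (inr w) from rfl,
          star_ge_mul_pv, if_neg (by simp), mul_zero]
        exact zero_mem _
    | inr f =>
        have hre : Lop ρ p * m * (star (ρ.ge e) * Rop ρ (inr f))
            = (Lop ρ p * m * ρ.pv (inr (G.r e))) * (star (ρ.ge e) * ρ.ge f) := by
          show _ = Lop ρ p * m * ρ.pv (inr (G.r e)) * (star (ρ.ge e) * ρ.ge f)
          rw [mul_assoc (Lop ρ p * m), ← mul_assoc (ρ.pv (inr (G.r e))),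
            star_ge_eq_pv_mul ρ e]
          rfl
        rw [hre]
        exact rangeSub_mul_mem φ (hm p (inl (G.r e)))
          (star_ge_ge_mem_range ρ hφpw hφrho e f)

include hφpw hφrho in
lemma sandwich_mem_range (hL : IsLPA K G L ρ) (a : L) (p q : G.V1 ⊕ G.E) :
    Lop ρ p * a * Rop ρ q ∈ rangeSub φ := by
  have ha := mem_span_closure_gensL ρ hL a
  induction ha using Submodule.span_induction with
  | mem x hx =>
      have : ∀ y, y ∈ Subsemigroup.closure (gensL ρ) →
          ((∀ p q, Lop ρ p * y * Rop ρ q ∈ rangeSub φ) ∧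
            (∀ m, (∀ p q, Lop ρ p * m * Rop ρ q ∈ rangeSub φ) →
              (∀ p q, Lop ρ p * (m * y) * Rop ρ q ∈ rangeSub φ))) := by
        intro y hy
        induction hy using Subsemigroup.closure_induction with
        | mem z hz =>
            exact ⟨gensL_sandwich_mem ρ hφpw hφrho z hz,
              fun m hm => gensL_stable ρ hφpw hφrho z hz m hm⟩
        | mul z₁ z₂ hz₁ hz₂ ih₁ ih₂ =>
            refine ⟨?_, ?_⟩
            · intro p q
              have := ih₂.2 z₁ ih₁.1 p q
              exact this
            · intro m hm p q
              rw [← mul_assoc m z₁ z₂]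
              exact ih₂.2 (m * z₁) (ih₁.2 m hm) p q
      exact (this x hx).1 p q
  | zero => rw [mul_zero, zero_mul]; exact zero_mem _
  | add x y _ _ hx hy =>
      rw [mul_add, add_mul]
      exact add_mem hx hy
  | smul k x _ hx =>
      rw [mul_smul_comm, smul_mul_assoc]
      exact Submodule.smul_mem _ k hx

include hφpw hφrho in
lemma Msp_le_range (hL : IsLPA K G L ρ) : Msp ρ ≤ rangeSub φ := by
  rw [Msp, Submodule.span_le]
  rintro x ⟨u, w, a, rfl⟩
  exact sandwich_mem_range ρ hφpw hφrho hL a (inl u) (inl w)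

end RangeSurj


section Injectivity

variable {G : BipSepGraph} {A : Type} [NonUnitalRing A] [Module K A]
  [SMulCommClass K A A] [IsScalarTower K A A] [StarRing A] [StarModule K A]
  (σ : LWRep K G A)

lemma pw_mul_rho {e f : G.E} (h1 : G.s e = G.s f) (h2 : ¬ G.c e f) (w : G.V1) :
    σ.pw w * σ.rho e f = if w = G.r e then σ.rho e f else 0 := by
  rw [← rhoHat_of_not σ h2, pw_mul_rhoHat σ h1 w]

lemma rho_mul_pw {e f : G.E} (h1 : G.s e = G.s f) (h2 : ¬ G.c e f) (w : G.V1) :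
    σ.rho e f * σ.pw w = if w = G.r f then σ.rho e f else 0 := by
  rw [← rhoHat_of_not σ h2, rhoHat_mul_pw σ h1 w]

/-- Every element that is localized between two `p_w`'s absorbs them. -/
lemma loc_absorb {x : A} {w₁ w₂ : G.V1} (hx : x = σ.pw w₁ * x * σ.pw w₂) :
    σ.pw w₁ * x = x ∧ x * σ.pw w₂ = x := by
  constructor
  · conv_lhs => rw [hx, ← mul_assoc, ← mul_assoc, σ.pw_idem]
    exact hx.symm
  · conv_lhs => rw [hx, mul_assoc, σ.pw_idem]
    exact hx.symm

lemma closure_loc {x : A} (hx : x ∈ Subsemigroup.closure (gensLW σ)) :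
    ∃ w₁ w₂, x = σ.pw w₁ * x * σ.pw w₂ := by
  induction hx using Subsemigroup.closure_induction with
  | mem z hz =>
      rcases hz with ⟨w, hz⟩ | ⟨e, f, h1, h2, hz⟩ <;> subst hz
      · exact ⟨w, w, by rw [σ.pw_idem, σ.pw_idem]⟩
      · exact ⟨G.r e, G.r f, by rw [σ.rho_left e f h1 h2, σ.rho_right e f h1 h2]⟩
  | mul z₁ z₂ hz₁ hz₂ ih₁ ih₂ =>
      obtain ⟨a, b, h₁⟩ := ih₁
      obtain ⟨c, d, h₂⟩ := ih₂
      refine ⟨a, d, ?_⟩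
      conv_lhs => rw [show z₁ * z₂ = (σ.pw a * z₁) * (z₂ * σ.pw d) from by
        rw [(loc_absorb σ h₁).1, (loc_absorb σ h₂).2]]
      simp only [mul_assoc]

lemma vanish_off {x : A} {S : Finset (G.V1 × G.V1)}
    (hx : x = ∑ p ∈ S, σ.pw p.1 * x * σ.pw p.2) {w w' : G.V1} (hw : (w, w') ∉ S) :
    σ.pw w * x * σ.pw w' = 0 := by
  conv_lhs => rw [hx]
  rw [Finset.mul_sum, Finset.sum_mul]
  refine Finset.sum_eq_zero fun p hp => ?_
  have hne : p ≠ (w, w') := fun h => hw (h ▸ hp)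
  by_cases h1 : w = p.1
  · have h2 : w' ≠ p.2 := fun h => hne (Prod.ext h1.symm h.symm)
    rw [mul_assoc, mul_assoc (σ.pw p.1 * x), σ.pw_orth p.2 w' (fun h => h2 h.symm), mul_zero,
      mul_zero]
  · rw [← mul_assoc (σ.pw w), ← mul_assoc (σ.pw w), σ.pw_orth w p.1 h1, zero_mul, zero_mul,
      zero_mul]

lemma corner_decomp (hLW : IsLW K G A σ) (x : A) :
    ∃ S : Finset (G.V1 × G.V1), x = ∑ p ∈ S, σ.pw p.1 * x * σ.pw p.2 := by
  have hx := mem_span_closure_gensLW σ hLW x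
  induction hx using Submodule.span_induction with
  | mem z hz =>
      obtain ⟨w₁, w₂, h⟩ := closure_loc σ hz
      exact ⟨{(w₁, w₂)}, by rw [Finset.sum_singleton, ← h]⟩
  | zero => exact ⟨∅, by simp⟩
  | add y z hy hz ihy ihz =>
      obtain ⟨Sy, hSy⟩ := ihy
      obtain ⟨Sz, hSz⟩ := ihz
      refine ⟨Sy ∪ Sz, ?_⟩
      have expand : ∀ p ∈ Sy ∪ Sz, σ.pw p.1 * (y + z) * σ.pw p.2
          = σ.pw p.1 * y * σ.pw p.2 + σ.pw p.1 * z * σ.pw p.2 := by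
        intro p _
        rw [mul_add, add_mul]
      rw [Finset.sum_congr rfl expand, Finset.sum_add_distrib]
      have hy' : ∑ p ∈ Sy ∪ Sz, σ.pw p.1 * y * σ.pw p.2 = y := by
        rw [← Finset.sum_subset Finset.subset_union_left
          (fun p _ hp => vanish_off σ hSy (by simpa using hp))]
        exact hSy.symm
      have hz' : ∑ p ∈ Sy ∪ Sz, σ.pw p.1 * z * σ.pw p.2 = z := by
        rw [← Finset.sum_subset Finset.subset_union_right
          (fun p _ hp => vanish_off σ hSz (by simpa using hp))]
        exact hSz.symm
      rw [hy', hz']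
  | smul k y hy ihy =>
      obtain ⟨S, hS⟩ := ihy
      refine ⟨S, ?_⟩
      have expand : ∀ p ∈ S, σ.pw p.1 * (k • y) * σ.pw p.2
          = k • (σ.pw p.1 * y * σ.pw p.2) := by
        intro p _
        rw [mul_smul_comm, smul_mul_assoc]
      rw [Finset.sum_congr rfl expand, ← Finset.smul_sum, ← hS]

lemma corner_vanish_zero (hLW : IsLW K G A σ) (x : A)
    (h : ∀ w w', σ.pw w * x * σ.pw w' = 0) : x = 0 := by
  obtain ⟨S, hS⟩ := corner_decomp σ hLW x
  rw [hS]
  exact Finset.sum_eq_zero fun p _ => h p.1 p.2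

lemma triple_pw (w w₀ w' : G.V1) (a : A) :
    σ.pw w * (σ.pw w₀ * (σ.pw w' * a)) = if w' = w₀ ∧ w = w₀ then σ.pw w₀ * a else 0 := by
  rw [← mul_assoc (σ.pw w₀) (σ.pw w'), pw_mul_pw σ w₀ w']
  by_cases h1 : w' = w₀
  · rw [if_pos h1.symm]
    rw [← mul_assoc (σ.pw w), pw_mul_pw σ w w₀]
    by_cases h2 : w = w₀
    · rw [if_pos h2, if_pos ⟨h1, h2⟩, h2]
    · rw [if_neg h2, if_neg (fun hc => h2 hc.2), zero_mul]
  · rw [if_neg (fun hc => h1 hc.symm), if_neg (fun hc => h1 hc.1), zero_mul, mul_zero]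

lemma triple_rho {e f : G.E} (h1 : G.s e = G.s f) (h2 : ¬ G.c e f) (w w' : G.V1) (a : A) :
    σ.pw w * (σ.rho e f * (σ.pw w' * a))
      = if w' = G.r f ∧ w = G.r e then σ.rho e f * a else 0 := by
  rw [← mul_assoc (σ.rho e f) (σ.pw w'), rho_mul_pw σ h1 h2 w']
  by_cases hw' : w' = G.r f
  · rw [if_pos hw', ← mul_assoc (σ.pw w), pw_mul_rho σ h1 h2 w]
    by_cases hw : w = G.r e
    · rw [if_pos hw, if_pos ⟨hw', hw⟩]
    · rw [if_neg hw, if_neg (fun hc => hw hc.2), zero_mul]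
  · rw [if_neg hw', if_neg (fun hc => hw' hc.1), zero_mul, mul_zero]

lemma evalE {G' : BipSepGraph} {A' : Type} [NonUnitalRing A'] [Module K A']
    [SMulCommClass K A' A'] [IsScalarTower K A' A'] (i j w w' : G'.V1) (x a : A') :
    ((Emat K (inr i : G'.E ⊕ G'.V1) (inr j) x) (Finsupp.single (inr w') a)) (inr w)
      = if w' = j ∧ w = i then x * a else 0 := by
  rw [Emat_apply_single]
  by_cases h1 : w' = j
  · rw [if_pos (by rw [h1]), Finsupp.single_apply]
    by_cases h2 : w = i
    · rw [if_pos (by rw [h2]), if_pos ⟨h1, h2⟩]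
    · rw [if_neg (by simpa [Sum.inr.injEq] using fun hc => h2 hc.symm),
        if_neg (fun hc => h2 hc.2)]
  · rw [if_neg (by simpa [Sum.inr.injEq] using h1), if_neg (fun hc => h1 hc.1),
      Finsupp.coe_zero, Pi.zero_apply]

section MainEval

variable {L : Type} [NonUnitalRing L] [Module K L]
  [SMulCommClass K L L] [IsScalarTower K L L] [StarRing L] [StarModule K L]
  (ρ : LPARep K G L) (g : G.V0 → G.E) (hg : ∀ v, G.s (g v) = v)
  (φ : A →⋆ₙₐ[K] L) (ψ : L →⋆ₙₐ[K] StarOp K ((G.E ⊕ G.V1) →₀ A))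
  (hφpw : ∀ w, φ (σ.pw w) = ρ.pv (inr w))
  (hφrho : ∀ e f, G.s e = G.s f → ¬ G.c e f → φ (σ.rho e f) = star (ρ.ge e) * ρ.ge f)
  (hψpv : ∀ u, ψ (ρ.pv u) = pvB σ g u)
  (hψge : ∀ e, ψ (ρ.ge e) = geB σ g e)

include hφpw hψpv in
lemma psiphi_pw_T (w₀ : G.V1) :
    (ψ (φ (σ.pw w₀))).T = Emat K (inr w₀) (inr w₀) (σ.pw w₀) := by
  rw [hφpw, hψpv]
  rfl

include hφrho hψge hg in
lemma psiphi_rho_T {e f : G.E} (h1 : G.s e = G.s f) (h2 : ¬ G.c e f) :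
    (ψ (φ (σ.rho e f))).T = Emat K (inr (G.r e)) (inr (G.r f)) (σ.rho e f) := by
  rw [hφrho e f h1 h2, map_mul, map_star, hψge, hψge]
  show geBS σ g e * geBT σ g f = _
  rw [geBS_mul_geBT σ g hg h1, rhoHat_of_not σ h2]

include hφpw hφrho hψpv hψge hg in
lemma main_eval (hLW : IsLW K G A σ) (x : A) (w w' : G.V1) (a : A) :
    ((ψ (φ x)).T (Finsupp.single (inr w') a)) (inr w)
      = σ.pw w * (x * (σ.pw w' * a)) := by
  have hx := mem_span_closure_gensLW σ hLW x
  induction hx using Submodule.span_induction generalizing w w' a with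
  | mem z hz =>
      -- strengthened closure induction
      have claim : ∀ y ∈ Subsemigroup.closure (gensLW σ),
          (∀ w w' a, ((ψ (φ y)).T (Finsupp.single (inr w') a)) (inr w)
              = σ.pw w * (y * (σ.pw w' * a))) ∧
          (∀ m, (∀ w w' a, ((ψ (φ m)).T (Finsupp.single (inr w') a)) (inr w)
                = σ.pw w * (m * (σ.pw w' * a))) →
            (∀ w w' a, ((ψ (φ (m * y))).T (Finsupp.single (inr w') a)) (inr w)
                = σ.pw w * ((m * y) * (σ.pw w' * a)))) := by
        intro y hy
        induction hy using Subsemigroup.closure_induction with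
        | mem z hz =>
            rcases hz with ⟨w₀, hz⟩ | ⟨e, f, h1, h2, hz⟩ <;> subst hz
            · constructor
              · intro w w' a
                rw [psiphi_pw_T σ ρ g φ ψ hφpw hψpv w₀, evalE, triple_pw]
              · intro m hm w w' a
                rw [map_mul, map_mul, StarOp.mul_T, Module.End.mul_apply,
                  psiphi_pw_T σ ρ g φ ψ hφpw hψpv w₀, Emat_apply_single]
                by_cases hww : w' = w₀
                · rw [if_pos (by rw [hww]), hm w w₀ (σ.pw w₀ * a), mul_assoc m, hww]
                · rw [if_neg (by simpa [Sum.inr.injEq] using hww), map_zero,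
                    Finsupp.coe_zero, Pi.zero_apply, mul_assoc m,
                    ← mul_assoc (σ.pw w₀) (σ.pw w'), pw_mul_pw σ w₀ w',
                    if_neg (fun hc => hww hc.symm), zero_mul, mul_zero, mul_zero]
            · constructor
              · intro w w' a
                rw [psiphi_rho_T σ ρ g hg φ ψ hφrho hψge h1 h2, evalE,
                  triple_rho σ h1 h2]
              · intro m hm w w' a
                rw [map_mul, map_mul, StarOp.mul_T, Module.End.mul_apply,
                  psiphi_rho_T σ ρ g hg φ ψ hφrho hψge h1 h2, Emat_apply_single]
                by_cases hww : w' = G.r f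
                · rw [if_pos (by rw [hww]), hm w (G.r e) (σ.rho e f * a), mul_assoc m, hww]
                  rw [← mul_assoc (σ.pw (G.r e)) (σ.rho e f), σ.rho_left e f h1 h2,
                    ← mul_assoc (σ.rho e f) (σ.pw (G.r f)), σ.rho_right e f h1 h2]
                · rw [if_neg (by simpa [Sum.inr.injEq] using hww), map_zero,
                    Finsupp.coe_zero, Pi.zero_apply, mul_assoc m,
                    ← mul_assoc (σ.rho e f) (σ.pw w'), rho_mul_pw σ h1 h2 w',
                    if_neg hww, zero_mul, mul_zero, mul_zero]
        | mul z₁ z₂ hz₁ hz₂ ih₁ ih₂ =>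
            refine ⟨fun w w' a => ih₂.2 z₁ ih₁.1 w w' a, fun m hm w w' a => ?_⟩
            rw [← mul_assoc m z₁ z₂]
            exact ih₂.2 (m * z₁) (ih₁.2 m hm) w w' a
      exact (claim z hz).1 w w' a
  | zero =>
      rw [map_zero, map_zero, StarOp.zero_T, LinearMap.zero_apply, Finsupp.coe_zero,
        Pi.zero_apply, zero_mul, mul_zero]
  | add y z hy hz ihy ihz =>
      rw [map_add, map_add, StarOp.add_T, LinearMap.add_apply, Finsupp.add_apply,
        ihy, ihz, add_mul, mul_add]
  | smul k y hy ihy =>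
      rw [map_smul, map_smul, StarOp.smul_T, LinearMap.smul_apply, Finsupp.smul_apply,
        ihy, smul_mul_assoc, mul_smul_comm]

end MainEval

end Injectivity

variable (K)

/-- For a row-finite bipartite separated graph `(E,C)` with
`s(E¹)=E⁰⁰` and `r(E¹)=E⁰¹`, there is a `*`-algebra isomorphism
`φ_W : LW(E,C) → W L(E,C) W` with `φ_W(p_w)=w` and `φ_W(ρ(e,f)) = e* f`. -/
theorem statement1 (G : BipSepGraph) (hs : Function.Surjective G.s)
    (hr : Function.Surjective G.r)
    (L : Type) [NonUnitalRing L] [Module K L] [SMulCommClass K L L] [IsScalarTower K L L]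
    [StarRing L] [StarModule K L] (ρ : LPARep K G L) (hL : IsLPA K G L ρ)
    (LW : Type) [NonUnitalRing LW] [Module K LW] [SMulCommClass K LW LW]
    [IsScalarTower K LW LW] [StarRing LW] [StarModule K LW]
    (σ : LWRep K G LW) (hLW : IsLW K G LW σ) :
    ∃ φ : LW →⋆ₙₐ[K] L, Function.Injective φ ∧
      Set.range φ = (Submodule.span K
        {x : L | ∃ (u w : G.V1) (a : L), x = ρ.pv (inr u) * a * ρ.pv (inr w)} : Submodule K L) ∧
      (∀ w : G.V1, φ (σ.pw w) = ρ.pv (inr w)) ∧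
      (∀ e f, G.s e = G.s f → ¬ G.c e f → φ (σ.rho e f) = star (ρ.ge e) * ρ.ge f) := by
  classical
  choose g hg using hs
  obtain ⟨θ, ⟨hθpw, hθrho⟩, -⟩ := hLW (MspSub ρ) (sigmaW ρ)
  set φ' : LW →⋆ₙₐ[K] L := (NonUnitalStarSubalgebraClass.subtype (MspSub ρ)).comp θ with hφ'
  have hφpw : ∀ w, φ' (σ.pw w) = ρ.pv (inr w) := fun w => by
    show ((θ (σ.pw w) : MspSub ρ) : L) = _
    rw [hθpw w]
    rfl
  have hφrho : ∀ e f, G.s e = G.s f → ¬ G.c e f →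
      φ' (σ.rho e f) = star (ρ.ge e) * ρ.ge f := fun e f h1 h2 => by
    show ((θ (σ.rho e f) : MspSub ρ) : L) = _
    rw [hθrho e f h1 h2]
    rfl
  obtain ⟨ψ, ⟨hψpv, hψge⟩, -⟩ := hL (StarOp K ((G.E ⊕ G.V1) →₀ LW)) (sigmaB σ g hg)
  refine ⟨φ', ?_, ?_, hφpw, hφrho⟩
  · -- injectivity
    have hker : ∀ z, φ' z = 0 → z = 0 := by
      intro z hz
      refine corner_vanish_zero σ hLW z fun w w' => ?_
      have hme := main_eval σ ρ g hg φ' ψ hφpw hφrho hψpv hψge hLW z w w' (σ.pw w')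
      rw [hz, map_zero] at hme
      have h0 : (((0 : StarOp K ((G.E ⊕ G.V1) →₀ LW)).T
          (Finsupp.single (inr w') (σ.pw w'))) (inr w) : LW) = 0 := by
        rw [StarOp.zero_T, LinearMap.zero_apply, Finsupp.coe_zero, Pi.zero_apply]
      rw [h0, σ.pw_idem w'] at hme
      rw [mul_assoc]
      exact hme.symm
    intro x y hxy
    have h1 : φ' (x - y) = 0 := by rw [map_sub, hxy, sub_self]
    have h2 := hker _ h1
    exact sub_eq_zero.mp h2
  · -- range
    refine Set.Subset.antisymm ?_ ?_
    · rintro x ⟨y, rfl⟩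
      exact (θ y).2
    · intro x hx
      have hx' : x ∈ Msp ρ := hx
      obtain ⟨y, hy⟩ := Msp_le_range ρ hφpw hφrho hL hx'
      exact ⟨y, hy⟩
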